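/- arXiv:1112.4253 — 5 statements merged into one kernel-verified Lean document; each statement's English description precedes it below -/
import Mathlib

section
/- Let T be a half de Bruijn sequence of order k and S a de Bruijn sequence of order n, and let G(i,j) = T(i) XOR S(j) be the 2^(k-1) × 2^n product array (indices cyclic). Then for every pair (X, Y) with X a binary k-tuple and Y a binary n-tuple such that X(0) = Y(0), there is exactly one position (i,j) in G such that the cross-shaped pattern at (i,j), namely the vertical window (G(i,j), G(i+1,j), ..., G(i+k-1,j)) together with the horizontal window (G(i,j), G(i,j+1), ..., G(i,j+n-1)), equals (X, Y). -/
/-- Window of length `m` starting at position `i` in a cyclic binary sequence of length `L`. -/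
def cycWindow (L m : ℕ) (S : ℕ → Bool) (i : ℕ) : Fin m → Bool :=
  fun a => S ((i + (a : ℕ)) % L)

/-- A binary de Bruijn sequence of order `n`: a cyclic sequence of length `2^n` in which
every binary `n`-tuple appears exactly once as a cyclic window. -/
def IsDeBruijn (n : ℕ) (S : ℕ → Bool) : Prop :=
  ∀ X : Fin n → Bool, ∃! i : Fin (2 ^ n), cycWindow (2 ^ n) n S (i : ℕ) = X

/-- A half de Bruijn sequence of order `n`: a cyclic binary sequence of length `2^(n-1)` in
which, for every binary `n`-tuple `X`, exactly one of `X` and its bitwise complement appears,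
and it appears exactly once, as a cyclic window. -/
def IsHalfDeBruijn (n : ℕ) (T : ℕ → Bool) : Prop :=
  ∀ X : Fin n → Bool, ∃! i : Fin (2 ^ (n - 1)),
    cycWindow (2 ^ (n - 1)) n T (i : ℕ) = X ∨
    cycWindow (2 ^ (n - 1)) n T (i : ℕ) = fun a => !(X a)

/-- An M-sequence of order `m`: a cyclic binary sequence of length `2^m - 1` in which every
nonzero binary `m`-tuple appears exactly once as a cyclic window. -/
def IsMSequence (m : ℕ) (S : ℕ → Bool) : Prop :=
  ∀ X : Fin m → Bool, X ≠ (fun _ => false) →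
    ∃! i : Fin (2 ^ m - 1), cycWindow (2 ^ m - 1) m S (i : ℕ) = X

/-- Every consistent cross-shaped pattern (a vertical `k`-tuple `X` and a horizontal `n`-tuple
`Y` agreeing on the shared first entry) appears exactly once in the product array
`G i j = T i XOR S j` of a half de Bruijn sequence of order `k` and a de Bruijn sequence of
order `n`. -/
theorem cross_unique (k n : ℕ) (hk : 0 < k) (hn : 0 < n) (T S : ℕ → Bool)
    (hT : IsHalfDeBruijn k T) (hS : IsDeBruijn n S)
    (X : Fin k → Bool) (Y : Fin n → Bool) (hXY : X ⟨0, hk⟩ = Y ⟨0, hn⟩) :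
    ∃! p : Fin (2 ^ (k - 1)) × Fin (2 ^ n),
      (∀ a : Fin k, xor (T (((p.1 : ℕ) + (a : ℕ)) % 2 ^ (k - 1))) (S (p.2 : ℕ)) = X a) ∧
      (∀ b : Fin n, xor (T (p.1 : ℕ)) (S (((p.2 : ℕ) + (b : ℕ)) % 2 ^ n)) = Y b) := by
  obtain ⟨i₀, hi₀, hi₀u⟩ := hT X
  obtain ⟨j₀, hj₀, hj₀u⟩ := hS (fun b => xor (Y b) (T (i₀ : ℕ)))
  have hS0 : S (j₀ : ℕ) = xor (Y ⟨0, hn⟩) (T (i₀ : ℕ)) := by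
    have := congrFun hj₀ ⟨0, hn⟩
    simpa [cycWindow, Nat.mod_eq_of_lt j₀.isLt] using this
  refine ⟨(i₀, j₀), ⟨?_, ?_⟩, ?_⟩
  · intro a
    rcases hi₀ with h | h
    · have hTa : T (((i₀ : ℕ) + (a : ℕ)) % 2 ^ (k - 1)) = X a := congrFun h a
      have hT0 : T (i₀ : ℕ) = X ⟨0, hk⟩ := by
        have := congrFun h ⟨0, hk⟩
        simpa [cycWindow, Nat.mod_eq_of_lt i₀.isLt] using this
      rw [hTa, hS0, hT0, hXY]
      simp
    · have hTa : T (((i₀ : ℕ) + (a : ℕ)) % 2 ^ (k - 1)) = !(X a) := congrFun h a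
      have hT0 : T (i₀ : ℕ) = !(X ⟨0, hk⟩) := by
        have := congrFun h ⟨0, hk⟩
        simpa [cycWindow, Nat.mod_eq_of_lt i₀.isLt] using this
      rw [hTa, hS0, hT0, hXY]
      simp
  · intro b
    have := congrFun hj₀ b
    simp only [cycWindow] at this
    rw [this]
    simp [Bool.xor_comm]
  · rintro ⟨i, j⟩ ⟨h1, h2⟩
    have hwT : ∀ a : Fin k, T (((i : ℕ) + (a : ℕ)) % 2 ^ (k - 1)) = xor (X a) (S (j : ℕ)) := by
      intro a
      have := h1 a
      rcases Bool.eq_false_or_eq_true (S (j : ℕ)) with hs | hs <;>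
        rcases Bool.eq_false_or_eq_true (T (((i : ℕ) + (a : ℕ)) % 2 ^ (k - 1))) with ht | ht <;>
        simp [hs, ht] at this ⊢ <;> simp [this]
    have hii : i = i₀ := by
      apply hi₀u
      rcases Bool.eq_false_or_eq_true (S (j : ℕ)) with hs | hs
      · right
        funext a
        simpa [cycWindow, hs] using hwT a
      · left
        funext a
        simpa [cycWindow, hs] using hwT a
    have hjj : j = j₀ := by
      apply hj₀u
      funext b
      have := h2 b
      rw [← hii]
      simp only [cycWindow]
      rcases Bool.eq_false_or_eq_true (T (i : ℕ)) with ht | ht <;>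
        rcases Bool.eq_false_or_eq_true (S (((j : ℕ) + (b : ℕ)) % 2 ^ n)) with hs | hs <;>
        simp [ht, hs] at this ⊢ <;> simp [this]
    rw [hii, hjj]
end

section
/- Any sensor shape that determines position uniquely in a 2^(k-1) × 2^n cyclic array must read at least k + n - 1 pixels; hence the cross sensor with k vertical and n horizontal pixels (sharing one pixel), reading exactly k + n - 1 pixels, is optimal in the number of sampled pixels. -/
/-- Any sensor shape `D` whose readout determines the position on the `2^(k-1) x 2^n` torus
uniquely must read at least `k + n - 1` pixels; hence the cross sensor, which reads exactly
`k + n - 1` pixels, is optimal in the number of sampled pixels. -/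
theorem sensor_lower_bound (k n : ℕ) (hk : 1 ≤ k) (hn : 1 ≤ n)
    (G : ℕ → ℕ → Bool) (D : Finset (ℕ × ℕ))
    (hinj : Function.Injective (fun p : Fin (2 ^ (k - 1)) × Fin (2 ^ n) =>
      fun d : D => G (((p.1 : ℕ) + (d : ℕ × ℕ).1) % 2 ^ (k - 1))
                     (((p.2 : ℕ) + (d : ℕ × ℕ).2) % 2 ^ n))) :
    k + n - 1 ≤ D.card := by
  have hcard := Fintype.card_le_of_injective _ hinj
  simp [Fintype.card_prod, ← pow_add] at hcard
  have : k - 1 + n ≤ D.card := by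
    have h2 : (2:ℕ) ^ (k - 1 + n) ≤ 2 ^ D.card := by simpa using hcard
    exact (Nat.pow_le_pow_iff_right (by norm_num)).mp h2
  omega
end

section
/- Robust self-location correctness: Let T be a half de Bruijn sequence of order k, S a de Bruijn sequence of order n, G(i,j) = T(i) XOR S(j), and let Z = W XOR E where W is the k × n window of G at some position and the error array E has fewer than n/4 ones in each row and fewer than k/2 ones in each column. Then the majority-decoding algorithm — (1) recover, up to a global complement b, the vertical k-tuple by comparing each row of Z to the first row and taking majority; (2) resolve b by choosing the unique assignment making the k-tuple a window of T; (3) recover each bit of the horizontal n-tuple by majority comparison of the corresponding column of Z against the recovered vertical k-tuple — outputs the true vertical k-tuple and horizontal n-tuple, and hence the true window position. -/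
private lemma xor5 (x y s e f : Bool) :
    (xor (xor x s) e = xor (xor y s) f) ↔ xor x e = xor y f := by
  revert x y s e f; decide

private lemma xor_inj (x e f : Bool) : (xor x e = xor x f) ↔ e = f := by
  revert x e f; decide

private lemma xor_notinj (x e f : Bool) : (xor (!x) e = xor x f) ↔ ¬ (e = f) := by
  revert x e f; decide

private lemma xor_left (x s e : Bool) : (xor (xor x s) e = x) ↔ e = s := by
  revert x s e; decide

/-- Correctness of the robust self-location algorithm: from a window of the product array
corrupted by fewer than `n/4` errors per row and fewer than `k/2` errors per column, the
majority-decoding algorithm recovers the true vertical `k`-tuple (step (2) being well defined: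
exactly one global complement `c` yields a window of `T`) and the true horizontal `n`-tuple,
and hence the true window position. -/
theorem robust_self_location (k n K N : ℕ) (hk : 0 < k) (hn : 0 < n)
    (hK : K = 2 ^ (k - 1)) (hN : N = 2 ^ n)
    (T S : ℕ → Bool) (hT : IsHalfDeBruijn k T) (hS : IsDeBruijn n S)
    (i j : ℕ) (hi : i < K) (hj : j < N)
    (E Z : Fin k → Fin n → Bool)
    (hZ : ∀ a b, Z a b = xor (xor (T ((i + (a : ℕ)) % K)) (S ((j + (b : ℕ)) % N))) (E a b))
    (hrow : ∀ a : Fin k, (Finset.univ.filter (fun b => E a b = true)).card * 4 < n)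
    (hcol : ∀ b : Fin n, (Finset.univ.filter (fun a => E a b = true)).card * 2 < k)
    (decX : Bool → Fin k → Bool)
    (hdecX : ∀ c a, decX c a =
      if n < 2 * (Finset.univ.filter (fun b => Z a b = Z ⟨0, hk⟩ b)).card then c else !c) :
    (∃! c : Bool, ∃ q : ℕ, q < K ∧ ∀ a : Fin k, T ((q + (a : ℕ)) % K) = decX c a) ∧
    (∀ c : Bool, (∃ q : ℕ, q < K ∧ ∀ a : Fin k, T ((q + (a : ℕ)) % K) = decX c a) →
      (∀ a : Fin k, decX c a = T ((i + (a : ℕ)) % K)) ∧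
      (∀ b : Fin n,
        (if k < 2 * (Finset.univ.filter (fun a => Z a b = decX c a)).card
         then false else true) = S ((j + (b : ℕ)) % N))) := by
  subst hK hN
  have hz0 : ((⟨0, hk⟩ : Fin k) : ℕ) = 0 := rfl
  -- Step 1: the decoded vertical tuple is (up to complement c) the true one
  have hdec : ∀ c (a : Fin k),
      decX c a = xor (xor (T ((i + (a : ℕ)) % 2 ^ (k - 1))) (T ((i + 0) % 2 ^ (k - 1)))) c := by
    intro c a
    rw [hdecX]
    have hiff : ∀ b : Fin n, (Z a b = Z ⟨0, hk⟩ b) ↔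
        (xor (T ((i + (a : ℕ)) % 2 ^ (k - 1))) (E a b)
          = xor (T ((i + 0) % 2 ^ (k - 1))) (E ⟨0, hk⟩ b)) := by
      intro b
      rw [hZ, hZ]
      simp only [hz0]
      exact xor5 _ _ _ _ _
    have hra := hrow a
    have hr0 := hrow ⟨0, hk⟩
    have hsub : (Finset.univ.filter (fun b => ¬ (E a b = E ⟨0, hk⟩ b)))
        ⊆ (Finset.univ.filter (fun b => E a b = true))
          ∪ (Finset.univ.filter (fun b => E ⟨0, hk⟩ b = true)) := by
      intro b hb
      simp only [Finset.mem_filter, Finset.mem_union, Finset.mem_univ, true_and] at *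
      cases h1 : E a b <;> cases h2 : E ⟨0, hk⟩ b <;> simp_all
    have hD : (Finset.univ.filter (fun b => ¬ (E a b = E ⟨0, hk⟩ b))).card
        ≤ (Finset.univ.filter (fun b => E a b = true)).card
          + (Finset.univ.filter (fun b => E ⟨0, hk⟩ b = true)).card :=
      le_trans (Finset.card_le_card hsub) (Finset.card_union_le _ _)
    have hsplit : (Finset.univ.filter (fun b => E a b = E ⟨0, hk⟩ b)).card
        + (Finset.univ.filter (fun b => ¬ (E a b = E ⟨0, hk⟩ b))).card = n := by
      rw [Finset.card_filter_add_card_filter_not]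
      simp
    by_cases hta : T ((i + (a : ℕ)) % 2 ^ (k - 1)) = T ((i + 0) % 2 ^ (k - 1))
    · have hfe : (Finset.univ.filter (fun b => Z a b = Z ⟨0, hk⟩ b))
          = (Finset.univ.filter (fun b => E a b = E ⟨0, hk⟩ b)) := by
        apply Finset.filter_congr
        intro b _
        rw [hiff b, hta]
        exact xor_inj _ _ _
      rw [hfe, if_pos (by omega), hta]
      simp
    · have hta' : T ((i + (a : ℕ)) % 2 ^ (k - 1)) = ! T ((i + 0) % 2 ^ (k - 1)) := by
        cases h1 : T ((i + (a : ℕ)) % 2 ^ (k - 1)) <;>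
          cases h2 : T ((i + 0) % 2 ^ (k - 1)) <;> simp_all
      have hfe : (Finset.univ.filter (fun b => Z a b = Z ⟨0, hk⟩ b))
          = (Finset.univ.filter (fun b => ¬ (E a b = E ⟨0, hk⟩ b))) := by
        apply Finset.filter_congr
        intro b _
        rw [hiff b, hta']
        exact xor_notinj _ _ _
      rw [hfe, if_neg (by omega), hta']
      simp
  have hdeceq : ∀ a : Fin k,
      decX (T ((i + 0) % 2 ^ (k - 1))) a = T ((i + (a : ℕ)) % 2 ^ (k - 1)) := by
    intro a
    rw [hdec]
    cases T ((i + (a : ℕ)) % 2 ^ (k - 1)) <;> cases T ((i + 0) % 2 ^ (k - 1)) <;> rfl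
  have hdecneq : ∀ a : Fin k,
      decX (! T ((i + 0) % 2 ^ (k - 1))) a = ! T ((i + (a : ℕ)) % 2 ^ (k - 1)) := by
    intro a
    rw [hdec]
    cases T ((i + (a : ℕ)) % 2 ^ (k - 1)) <;> cases T ((i + 0) % 2 ^ (k - 1)) <;> rfl
  have hP : ∃ q : ℕ, q < 2 ^ (k - 1) ∧
      ∀ a : Fin k, T ((q + (a : ℕ)) % 2 ^ (k - 1)) = decX (T ((i + 0) % 2 ^ (k - 1))) a :=
    ⟨i, hi, fun a => (hdeceq a).symm⟩
  have huniqc : ∀ c : Bool,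
      (∃ q : ℕ, q < 2 ^ (k - 1) ∧ ∀ a : Fin k, T ((q + (a : ℕ)) % 2 ^ (k - 1)) = decX c a) →
      c = T ((i + 0) % 2 ^ (k - 1)) := by
    rintro c ⟨q, hq, hqa⟩
    by_contra hc
    have hc' : c = ! T ((i + 0) % 2 ^ (k - 1)) := by
      cases c <;> cases h0 : T ((i + 0) % 2 ^ (k - 1)) <;> simp_all
    subst hc'
    obtain ⟨w, -, hu⟩ := hT (fun a => T ((i + (a : ℕ)) % 2 ^ (k - 1)))
    have h1 : (⟨i, hi⟩ : Fin (2 ^ (k - 1))) = w := hu ⟨i, hi⟩ (Or.inl rfl)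
    have h2 : (⟨q, hq⟩ : Fin (2 ^ (k - 1))) = w := by
      refine hu ⟨q, hq⟩ (Or.inr (funext fun a => ?_))
      show T ((q + (a : ℕ)) % 2 ^ (k - 1)) = _
      rw [hqa a, hdecneq a]
    have hiq : q = i := by
      have := h2.trans h1.symm
      simpa using this
    subst hiq
    have := hqa ⟨0, hk⟩
    rw [hdecneq ⟨0, hk⟩] at this
    simp only [hz0] at this
    simp at this
  constructor
  · exact ⟨T ((i + 0) % 2 ^ (k - 1)), hP, huniqc⟩
  · intro c hc
    have hc0 := huniqc c hc
    subst hc0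
    refine ⟨hdeceq, fun b => ?_⟩
    have hfe2 : (Finset.univ.filter (fun a => Z a b = decX (T ((i + 0) % 2 ^ (k - 1))) a))
        = (Finset.univ.filter (fun a => E a b = S ((j + (b : ℕ)) % 2 ^ n))) := by
      apply Finset.filter_congr
      intro a _
      rw [hdeceq a, hZ]
      exact xor_left _ _ _
    have hcb := hcol b
    have hsplit2 : (Finset.univ.filter (fun a => E a b = true)).card
        + (Finset.univ.filter (fun a => ¬ (E a b = true))).card = k := by
      rw [Finset.card_filter_add_card_filter_not]
      simp
    rw [hfe2]
    cases hsb : S ((j + (b : ℕ)) % 2 ^ n)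
    · have hfe3 : (Finset.univ.filter (fun a => E a b = false))
          = (Finset.univ.filter (fun a => ¬ (E a b = true))) := by
        apply Finset.filter_congr
        intro a _
        simp
      rw [hfe3, if_pos (by omega)]
    · rw [if_neg (by omega)]
end

section
/- Half the bits in a column cannot be tolerated: Let T be a half de Bruijn sequence of order k, S a de Bruijn sequence of order n ≥ 1, and G(i,j) = T(i) XOR S(j). There exist two distinct positions whose k × n windows W1, W2 in G differ in exactly one column (in all k entries of that column). Consequently, if an adversary may flip at least ⌈k/2⌉ bits within a single column of the sensed window, no decoder can always correctly determine the sensor position. -/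
/-!
Since `S` contains every `n`-tuple, it contains two windows `X ≠ Y` that differ only in one
coordinate `c`; taking the same row offset for `T`, the two product windows `T ⊗ X` and `T ⊗ Y`
then differ in exactly the full column `c`. Splitting that column into two halves `A`, `Aᶜ` of
sizes `⌊k/2⌋` and `⌈k/2⌉`, flipping `A` in the first window and `Aᶜ` in the second produces the
same received word, so a decoder must be wrong on one of the two positions.
-/

open Finset

def DifferInColumn {ι κ : Type*} (V₁ V₂ : ι → κ → Bool) (c : κ) : Prop :=
  (∀ a, V₁ a c ≠ V₂ a c) ∧ ∀ a b, b ≠ c → V₁ a b = V₂ a b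

def columnFlip {ι κ : Type*} [DecidableEq ι] [DecidableEq κ] (A : Finset ι) (c : κ) :
    ι → κ → Bool :=
  fun a b => decide (b = c ∧ a ∈ A)

section ColumnFlip

variable {ι κ : Type*} [DecidableEq ι] [DecidableEq κ]

theorem eq_of_columnFlip_eq_true {A : Finset ι} {c : κ} {a : ι} {b : κ}
    (h : columnFlip A c a b = true) : b = c :=
  (of_decide_eq_true h).1

theorem filter_columnFlip_eq [Fintype ι] (A : Finset ι) (c : κ) :
    univ.filter (fun a => columnFlip A c a c = true) = A := by
  ext a
  simp [columnFlip]

theorem DifferInColumn.xor_columnFlip_eq [Fintype ι] {V₁ V₂ : ι → κ → Bool}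
    {c : κ} (h : DifferInColumn V₁ V₂ c) (A : Finset ι) :
    (fun a b => xor (V₁ a b) (columnFlip A c a b)) =
      fun a b => xor (V₂ a b) (columnFlip Aᶜ c a b) := by
  funext a b
  by_cases hb : b = c
  · subst hb
    have hflip : V₂ a b = !V₁ a b := Bool.eq_not_iff.mpr (h.1 a).symm
    by_cases ha : a ∈ A <;> simp [columnFlip, hflip, ha]
  · simp [columnFlip, hb, h.2 a b hb]

end ColumnFlip

theorem differInColumn_xor {ι κ : Type*} (u : ι → Bool) {x y : κ → Bool} {c : κ}
    (hc : x c ≠ y c) (hoff : ∀ b, b ≠ c → x b = y b) :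
    DifferInColumn (fun a b => xor (u a) (x b)) (fun a b => xor (u a) (y b)) c :=
  ⟨fun a => by simpa using hc, fun a b hb => by simp only [hoff b hb]⟩

theorem IsDeBruijn.exists_windows_differ_only_at {n : ℕ} {S : ℕ → Bool} (hS : IsDeBruijn n S)
    (c : Fin n) : ∃ i j : Fin (2 ^ n), i ≠ j ∧
      cycWindow (2 ^ n) n S i c ≠ cycWindow (2 ^ n) n S j c ∧
      ∀ b, b ≠ c → cycWindow (2 ^ n) n S i b = cycWindow (2 ^ n) n S j b := by
  let X : Fin n → Bool := fun _ => false
  obtain ⟨i, hi, -⟩ := hS X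
  obtain ⟨j, hj, -⟩ := hS (Function.update X c true)
  refine ⟨i, j, ?_, ?_, fun b hb => ?_⟩
  · rintro rfl
    simpa [X] using congrFun (hi.symm.trans hj) c
  · simp [hi, hj, X]
  · simp [hi, hj, hb]

theorem half_column_errors_fatal_general (k n K N : ℕ) (hn : 0 < n)
    (hK : K = 2 ^ (k - 1)) (hN : N = 2 ^ n)
    (T S : ℕ → Bool) (hS : IsDeBruijn n S)
    (W : Fin K × Fin N → Fin k → Fin n → Bool)
    (hW : ∀ p a b, W p a b =
      xor (T (((p.1 : ℕ) + (a : ℕ)) % K)) (S (((p.2 : ℕ) + (b : ℕ)) % N))) :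
    (∃ p q : Fin K × Fin N, p ≠ q ∧ ∃ c : Fin n,
      (∀ a : Fin k, W p a c ≠ W q a c) ∧ ∀ a : Fin k, ∀ b : Fin n, b ≠ c → W p a b = W q a b) ∧
    (∀ dec : (Fin k → Fin n → Bool) → Fin K × Fin N,
      ∃ (p : Fin K × Fin N) (E : Fin k → Fin n → Bool) (c : Fin n),
        (∀ a b, E a b = true → b = c) ∧
        (Finset.univ.filter (fun a => E a c = true)).card ≤ (k + 1) / 2 ∧
        dec (fun a b => xor (W p a b) (E a b)) ≠ p) := by
  subst hK hN
  have hW' : ∀ p, W p = fun a b => xor (cycWindow _ k T p.1 a) (cycWindow _ n S p.2 b) :=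
    fun p => funext fun a => funext (hW p a)
  let c : Fin n := ⟨0, hn⟩
  obtain ⟨i, j, hij, hc, hoff⟩ := hS.exists_windows_differ_only_at c
  let p : Fin (2 ^ (k - 1)) × Fin (2 ^ n) := (⟨0, Nat.two_pow_pos _⟩, i)
  let q : Fin (2 ^ (k - 1)) × Fin (2 ^ n) := (⟨0, Nat.two_pow_pos _⟩, j)
  have hpq : p ≠ q := fun h => hij (congrArg Prod.snd h)
  have hdiff : DifferInColumn (W p) (W q) c := by
    rw [hW' p, hW' q]
    exact differInColumn_xor _ hc hoff
  refine ⟨⟨p, q, hpq, c, hdiff⟩, fun dec => ?_⟩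
  obtain ⟨A, -, hA⟩ := exists_subset_card_eq (s := (univ : Finset (Fin k))) (n := k / 2)
    (by simpa using Nat.div_le_self k 2)
  have hAc : #Aᶜ = k - k / 2 := by rw [card_compl, hA, Fintype.card_fin]
  rcases hpq.ne_or_ne (dec fun a b => xor (W p a b) (columnFlip A c a b)) with h | h
  · refine ⟨p, columnFlip A c, c, fun _ _ => eq_of_columnFlip_eq_true, ?_, h.symm⟩
    rw [filter_columnFlip_eq]
    omega
  · refine ⟨q, columnFlip Aᶜ c, c, fun _ _ => eq_of_columnFlip_eq_true, ?_, ?_⟩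
    · rw [filter_columnFlip_eq]
      omega
    · rw [← hdiff.xor_columnFlip_eq A]
      exact h.symm

/-- Half the bits in a column cannot be tolerated: there are two distinct positions whose
`k x n` windows in the product array differ in exactly one full column, and consequently no
decoder can always determine the position correctly if an adversary may flip at least
`ceil(k/2)` bits within a single column of the sensed window. -/
theorem half_column_errors_fatal (k n K N : ℕ) (hk : 0 < k) (hn : 0 < n)
    (hK : K = 2 ^ (k - 1)) (hN : N = 2 ^ n)
    (T S : ℕ → Bool) (hT : IsHalfDeBruijn k T) (hS : IsDeBruijn n S)
    (W : Fin K × Fin N → Fin k → Fin n → Bool)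
    (hW : ∀ p a b, W p a b =
      xor (T (((p.1 : ℕ) + (a : ℕ)) % K)) (S (((p.2 : ℕ) + (b : ℕ)) % N))) :
    (∃ p q : Fin K × Fin N, p ≠ q ∧ ∃ c : Fin n,
      (∀ a : Fin k, W p a c ≠ W q a c) ∧ ∀ a : Fin k, ∀ b : Fin n, b ≠ c → W p a b = W q a b) ∧
    (∀ dec : (Fin k → Fin n → Bool) → Fin K × Fin N,
      ∃ (p : Fin K × Fin N) (E : Fin k → Fin n → Bool) (c : Fin n),
        (∀ a b, E a b = true → b = c) ∧
        (Finset.univ.filter (fun a => E a c = true)).card ≤ (k + 1) / 2 ∧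
        dec (fun a b => xor (W p a b) (E a b)) ≠ p) :=
  half_column_errors_fatal_general k n K N hn hK hN T S hS W hW
end

section
/- In the product array G = T ⊗ S with T a half de Bruijn sequence of order k and S a de Bruijn sequence of order n, the minimum Hamming distance between two distinct k × n windows of G is exactly min(k, n): any two distinct windows differ in at least min(k,n) entries, and there exist two distinct windows differing in exactly k entries (one full column) and two differing in exactly n entries (one full row). -/
open Finset Function

def xorProd {α β : Type*} (x : α → Bool) (y : β → Bool) : α × β → Bool :=
  fun z => xor (x z.1) (y z.2)

theorem xorProd_not_not {α β : Type*} (x : α → Bool) (y : β → Bool) :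
    xorProd (fun a => !x a) (fun b => !y b) = xorProd x y := by
  funext z
  simp [xorProd]

section HammingDist

variable {α β : Type*} [Fintype α] [Fintype β]

theorem hammingDist_add_hammingDist_not (x y : α → Bool) :
    hammingDist x y + hammingDist x (fun a => !y a) = Fintype.card α := by
  rw [← card_univ, ← card_filter_add_card_filter_not (s := univ) (fun a => x a ≠ y a)]
  exact congrArg _ (congrArg card (filter_congr fun a _ => by simp))

theorem hammingDist_not_self (x : α → Bool) :
    hammingDist x (fun a => !x a) = Fintype.card α := by
  simpa using hammingDist_add_hammingDist_not x x

theorem hammingDist_update_not [DecidableEq α] (x : α → Bool) (a : α) :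
    hammingDist x (update x a (!x a)) = 1 := by
  refine card_eq_one.2 ⟨a, ?_⟩
  ext b
  by_cases h : b = a
  · subst h; simp
  · simp [h]

theorem hammingDist_xorProd (x x' : α → Bool) (y y' : β → Bool) :
    hammingDist (xorProd x y) (xorProd x' y') =
      hammingDist x x' * hammingDist y (fun b => !y' b) +
        hammingDist x (fun a => !x' a) * hammingDist y y' := by
  classical
  set A : Finset α := {a | x a ≠ x' a}
  set A' : Finset α := {a | x a ≠ !x' a}
  set B : Finset β := {b | y b ≠ y' b}
  set B' : Finset β := {b | y b ≠ !y' b}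
  have hsplit : univ.filter (fun z => xorProd x y z ≠ xorProd x' y' z) =
      A ×ˢ B' ∪ A' ×ˢ B := by
    ext ⟨a, b⟩
    simp only [A, A', B, B', mem_filter, mem_univ, true_and, mem_union, mem_product]
    simp only [xorProd]
    cases x a <;> cases x' a <;> cases y b <;> cases y' b <;> decide
  have hdisj : Disjoint A A' :=
    disjoint_filter.2 fun a _ h => by revert h; cases x a <;> cases x' a <;> decide
  rw [hammingDist, hsplit, card_union_of_disjoint (disjoint_product.2 (.inl hdisj)),
    card_product, card_product]
  rfl

theorem hammingDist_xorProd_left_eq (x : α → Bool) (y y' : β → Bool) :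
    hammingDist (xorProd x y) (xorProd x y') = Fintype.card α * hammingDist y y' := by
  simp [hammingDist_xorProd, hammingDist_not_self]

theorem hammingDist_xorProd_right_eq (x x' : α → Bool) (y : β → Bool) :
    hammingDist (xorProd x y) (xorProd x' y) = hammingDist x x' * Fintype.card β := by
  simp [hammingDist_xorProd, hammingDist_not_self]

theorem card_le_hammingDist_xorProd {x x' : α → Bool} (hx : x ≠ x')
    (hx' : x ≠ fun a => !x' a) (y y' : β → Bool) :
    Fintype.card β ≤ hammingDist (xorProd x y) (xorProd x' y') := by
  rw [hammingDist_xorProd, ← hammingDist_add_hammingDist_not y y', add_comm]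
  gcongr <;> exact Nat.le_mul_of_pos_left _ (hammingDist_pos.2 ‹_›)

end HammingDist

theorem IsDeBruijn.cycWindow_injective {n : ℕ} {S : ℕ → Bool} (hS : IsDeBruijn n S) :
    Injective fun i : Fin (2 ^ n) => cycWindow (2 ^ n) n S i :=
  fun _ _ h => (hS _).unique h rfl

theorem IsHalfDeBruijn.cycWindow_ne {k : ℕ} {T : ℕ → Bool} (hT : IsHalfDeBruijn k T)
    {i j : Fin (2 ^ (k - 1))} (hij : i ≠ j) :
    cycWindow (2 ^ (k - 1)) k T i ≠ cycWindow (2 ^ (k - 1)) k T j ∧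
      cycWindow (2 ^ (k - 1)) k T i ≠ fun a => !cycWindow (2 ^ (k - 1)) k T j a :=
  ⟨fun h => hij <| (hT _).unique (.inl h) (.inl rfl),
    fun h => hij <| (hT _).unique (.inr h) (.inl rfl)⟩

section ProductArray

variable {k n : ℕ} {T S : ℕ → Bool}

/-- The `k × n` window at `p` of the torus array `G (i, j) = T i xor S j`. -/
def productWindow (k n : ℕ) (T S : ℕ → Bool) (p : Fin (2 ^ (k - 1)) × Fin (2 ^ n)) :
    Fin k × Fin n → Bool :=
  xorProd (cycWindow (2 ^ (k - 1)) k T p.1) (cycWindow (2 ^ n) n S p.2)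

theorem ne_of_hammingDist_productWindow_pos {p q : Fin (2 ^ (k - 1)) × Fin (2 ^ n)}
    (h : 0 < hammingDist (productWindow k n T S p) (productWindow k n T S q)) : p ≠ q := by
  rintro rfl
  simp at h

theorem min_le_hammingDist_productWindow (hT : IsHalfDeBruijn k T) (hS : IsDeBruijn n S)
    {p q : Fin (2 ^ (k - 1)) × Fin (2 ^ n)} (hpq : p ≠ q) :
    min k n ≤ hammingDist (productWindow k n T S p) (productWindow k n T S q) := by
  unfold productWindow
  rcases eq_or_ne p.1 q.1 with h1 | h1
  · have h2 : p.2 ≠ q.2 := fun h2 => hpq (Prod.ext h1 h2)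
    rw [h1, hammingDist_xorProd_left_eq, Fintype.card_fin]
    exact (min_le_left _ _).trans
      (Nat.le_mul_of_pos_right _ (hammingDist_pos.2 (hS.cycWindow_injective.ne h2)))
  · obtain ⟨hne, hne_not⟩ := hT.cycWindow_ne h1
    calc min k n ≤ Fintype.card (Fin n) := by simp
      _ ≤ _ := card_le_hammingDist_xorProd hne hne_not _ _

theorem exists_hammingDist_productWindow_eq_left (hk : 0 < k) (hn : 0 < n)
    (hS : IsDeBruijn n S) :
    ∃ p q, p ≠ q ∧ hammingDist (productWindow k n T S p) (productWindow k n T S q) = k := by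
  set y := cycWindow (2 ^ n) n S ((0 : Fin (2 ^ n)) : ℕ)
  obtain ⟨j, hj⟩ := (hS (update y ⟨0, hn⟩ (!y ⟨0, hn⟩))).exists
  have h : hammingDist (productWindow k n T S (0, 0)) (productWindow k n T S (0, j)) = k := by
    dsimp only [productWindow]
    rw [hammingDist_xorProd_left_eq, hj, hammingDist_update_not, Fintype.card_fin, mul_one]
  exact ⟨_, _, ne_of_hammingDist_productWindow_pos (h ▸ hk), h⟩

theorem exists_hammingDist_productWindow_eq_right (hk : 0 < k) (hn : 0 < n)
    (hT : IsHalfDeBruijn k T) (hS : IsDeBruijn n S) :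
    ∃ p q, p ≠ q ∧ hammingDist (productWindow k n T S p) (productWindow k n T S q) = n := by
  set x := cycWindow (2 ^ (k - 1)) k T ((0 : Fin (2 ^ (k - 1))) : ℕ)
  set y := cycWindow (2 ^ n) n S ((0 : Fin (2 ^ n)) : ℕ)
  have hx : hammingDist x (update x ⟨0, hk⟩ (!x ⟨0, hk⟩)) * Fintype.card (Fin n) = n := by
    rw [hammingDist_update_not, Fintype.card_fin, one_mul]
  obtain ⟨i, hi | hi⟩ := (hT (update x ⟨0, hk⟩ (!x ⟨0, hk⟩))).exists
  · have h : hammingDist (productWindow k n T S (0, 0)) (productWindow k n T S (i, 0)) = n := by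
      dsimp only [productWindow]
      rw [hammingDist_xorProd_right_eq, hi, hx]
    exact ⟨_, _, ne_of_hammingDist_productWindow_pos (h ▸ hn), h⟩
  · obtain ⟨j, hj⟩ := (hS fun b => !y b).exists
    have h : hammingDist (productWindow k n T S (0, 0)) (productWindow k n T S (i, j)) = n := by
      dsimp only [productWindow]
      rw [hi, hj, xorProd_not_not, hammingDist_xorProd_right_eq, hx]
    exact ⟨_, _, ne_of_hammingDist_productWindow_pos (h ▸ hn), h⟩

end ProductArray

/-- The minimum Hamming distance between two distinct `k x n` windows of the product array is
exactly `min k n`: any two distinct windows differ in at least `min k n` entries, some pair of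
distinct windows differs in exactly `k` entries (a full column), and some pair differs in
exactly `n` entries (a full row). -/
theorem window_min_distance (k n K N : ℕ) (hk : 0 < k) (hn : 0 < n)
    (hK : K = 2 ^ (k - 1)) (hN : N = 2 ^ n)
    (T S : ℕ → Bool) (hT : IsHalfDeBruijn k T) (hS : IsDeBruijn n S)
    (W : Fin K × Fin N → Fin k → Fin n → Bool)
    (hW : ∀ p a b, W p a b =
      xor (T (((p.1 : ℕ) + (a : ℕ)) % K)) (S (((p.2 : ℕ) + (b : ℕ)) % N))) :
    (∀ p q : Fin K × Fin N, p ≠ q →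
      min k n ≤ (Finset.univ.filter
        (fun x : Fin k × Fin n => W p x.1 x.2 ≠ W q x.1 x.2)).card) ∧
    (∃ p q : Fin K × Fin N, p ≠ q ∧
      (Finset.univ.filter (fun x : Fin k × Fin n => W p x.1 x.2 ≠ W q x.1 x.2)).card = k) ∧
    (∃ p q : Fin K × Fin N, p ≠ q ∧
      (Finset.univ.filter (fun x : Fin k × Fin n => W p x.1 x.2 ≠ W q x.1 x.2)).card = n) := by
  subst hK hN
  have hdist : ∀ p q, (univ.filter fun x : Fin k × Fin n => W p x.1 x.2 ≠ W q x.1 x.2).card =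
      hammingDist (productWindow k n T S p) (productWindow k n T S q) := fun p q => by
    simp only [hW]
    rfl
  simp only [hdist]
  exact ⟨fun p q => min_le_hammingDist_productWindow hT hS,
    exists_hammingDist_productWindow_eq_left hk hn hS,
    exists_hammingDist_productWindow_eq_right hk hn hT hS⟩
end
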